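/- arXiv:2605.24443 — 3 statements merged into one kernel-verified Lean document; each statement's English description precedes it below -/
import Mathlib

section
/- Young-inequality form of the second-variation estimate. Under the same hypotheses as the two-parameter second-variation inequality (n ≤ d ≤ D < ∞, V, W smooth with V > −d, W > −D, φ smooth convex solving (Z_V/Z_W)^{1/d} det(D²φ)^{1/d} = exp((Θ_D(W∘∇φ) − Θ_d(V))/d), and (x, e) ↦ ⟨D²φ(x)e, e⟩ attaining its maximum at (x̄, e₁)), set ȳ = ∇φ(x̄), λ = ⟨D²φ(x̄)e₁, e₁⟩, V₁ = ⟨∇V(x̄), e₁⟩, V₁₁ = ⟨D²V(x̄)e₁, e₁⟩, W₁ = ⟨∇W(ȳ), e₁⟩, W₁₁ = ⟨D²W(ȳ)e₁, e₁⟩, V = V(x̄), W = W(ȳ). If moreover W₁₁ > 0, then for every ε ∈ (0,1): W₁₁·λ² ≤ (1/(1−ε))·(d/D)·((D+W)/(d+V))·V₁₁ + (1/(ε(1−ε)))·V₁²·W₁²/(W₁₁·(d+V)²). -/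
open MeasureTheory Metric Set
open scoped ENNReal RealInnerProductSpace

noncomputable section

/-- Euclidean space `ℝⁿ`. -/
abbrev Euc (n : ℕ) := EuclideanSpace ℝ (Fin n)

/-- The second directional derivative `⟨D²f(x)v, v⟩`. -/
def hess {n : ℕ} (f : Euc n → ℝ) (x v : Euc n) : ℝ :=
  iteratedFDeriv ℝ 2 f x ![v, v]

/-- The normalization constant `Z_{U,p} = ∫ (1 + U(x)/p)^(−p) dx`. -/
def Znorm {n : ℕ} (U : Euc n → ℝ) (p : ℝ) : ℝ :=
  ∫ x, (1 + U x / p) ^ (-p)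

/-- The measure `μ_{U,p}` with density `Z_{U,p}⁻¹ (1 + U(x)/p)^(−p)` w.r.t. Lebesgue. -/
def muUP {n : ℕ} (U : Euc n → ℝ) (p : ℝ) : Measure (Euc n) :=
  volume.withDensity fun x => ENNReal.ofReal ((Znorm U p)⁻¹ * (1 + U x / p) ^ (-p))

/-- The ratio `(p + U(x))/(p + |x|²)`. -/
def ratio0 {n : ℕ} (U : Euc n → ℝ) (p : ℝ) (x : Euc n) : ℝ :=
  (p + U x) / (p + ‖x‖ ^ 2)

/-- The ratio `|∇U(x)|²/(√p + |x|)²`. -/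
def ratio1 {n : ℕ} (U : Euc n → ℝ) (p : ℝ) (x : Euc n) : ℝ :=
  ‖gradient U x‖ ^ 2 / (Real.sqrt p + ‖x‖) ^ 2

/-- `c⁽⁰⁾_{U,p}(S) = inf_{x ∈ S} (p + U(x))/(p + |x|²)`. -/
def cLow {n : ℕ} (U : Euc n → ℝ) (p : ℝ) (S : Set (Euc n)) : ℝ := sInf (ratio0 U p '' S)

/-- `C⁽⁰⁾_{U,p}(S) = sup_{x ∈ S} (p + U(x))/(p + |x|²)`. -/
def cUp {n : ℕ} (U : Euc n → ℝ) (p : ℝ) (S : Set (Euc n)) : ℝ := sSup (ratio0 U p '' S)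

/-- `C⁽¹⁾_{U,p}(S) = sup_{x ∈ S} |∇U(x)|²/(√p + |x|)²`. -/
def cGrad {n : ℕ} (U : Euc n → ℝ) (p : ℝ) (S : Set (Euc n)) : ℝ := sSup (ratio1 U p '' S)

/-- The Lebesgue volume of the unit ball in `ℝⁿ`. -/
def unitBallVol (n : ℕ) : ℝ := (volume (ball (0 : Euc n) 1)).toReal

/-- `Θ_p(t) = p·log(1 + t/p)`. -/
def Theta (p t : ℝ) : ℝ := p * Real.log (1 + t / p)

/-- The Hessian matrix of `f` at `x` in the standard orthonormal basis of `ℝⁿ`. -/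
def hessMat {n : ℕ} (f : Euc n → ℝ) (x : Euc n) : Matrix (Fin n) (Fin n) ℝ :=
  Matrix.of fun i j =>
    iteratedFDeriv ℝ 2 f x ![EuclideanSpace.single i 1, EuclideanSpace.single j 1]


section Aux
set_option linter.unusedSectionVars false

section Generic
variable {E : Type*} [NormedAddCommGroup E] [NormedSpace ℝ E]
variable {F : Type*} [NormedAddCommGroup F] [NormedSpace ℝ F]

/-- push a constant application inside fderiv -/
lemma fderiv_apply_const {g : E → (E →L[ℝ] F)} {x : E} (hg : DifferentiableAt ℝ g x)
    (v w : E) : fderiv ℝ (fun y => g y v) x w = fderiv ℝ g x w v := by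
  rw [fderiv_clm_apply hg (differentiableAt_const v)]
  simp

/-- derivative of a line slice -/
lemma hasDerivAt_line {G : E → F} (hG : Differentiable ℝ G) (x v : E) (t : ℝ) :
    HasDerivAt (fun s : ℝ => G (x + s • v)) (fderiv ℝ G (x + t • v) v) t := by
  have hline : HasDerivAt (fun s : ℝ => x + s • v) v t := by
    simpa using ((hasDerivAt_id t).smul_const v).const_add x
  exact ((hG (x + t • v)).hasFDerivAt.comp_hasDerivAt t hline)

/-- second-order condition at a local max -/
lemma second_deriv_nonpos_of_isLocalMax {f f' : ℝ → ℝ} {c : ℝ}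
    (hfe : ∀ᶠ t in nhds 0, HasDerivAt f (f' t) t) (hf' : HasDerivAt f' c 0)
    (hmax : IsLocalMax f 0) : c ≤ 0 := by
  by_contra hc
  push_neg at hc
  obtain ⟨δ₀, hδ₀, hf⟩ := Metric.eventually_nhds_iff.mp hfe
  have hf0 : HasDerivAt f (f' 0) 0 := hf (by simp [hδ₀])
  have hf'0 : f' 0 = 0 := by
    have := hmax.deriv_eq_zero
    rwa [hf0.deriv] at this
  -- slope of f' tends to c > 0
  have hslope := hasDerivAt_iff_tendsto_slope.mp hf'
  have hev : ∀ᶠ s in nhdsWithin 0 {(0:ℝ)}ᶜ, 0 < slope f' 0 s :=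
    hslope.eventually (eventually_gt_nhds hc)
  -- get δ > 0 such that slope positive on punctured ball and f ≤ f 0 on ball
  obtain ⟨δ₁, hδ₁, h1⟩ := Metric.mem_nhdsWithin_iff.mp hev
  obtain ⟨δ₂, hδ₂, h2⟩ := Metric.eventually_nhds_iff.mp hmax
  set δ := min δ₀ (min δ₁ δ₂) with hδdef
  have hδ : 0 < δ := lt_min hδ₀ (lt_min hδ₁ hδ₂)
  have hδa : δ ≤ δ₀ := min_le_left _ _
  have hδb : δ ≤ δ₁ := le_trans (min_le_right _ _) (min_le_left _ _)
  have hδc : δ ≤ δ₂ := le_trans (min_le_right _ _) (min_le_right _ _)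
  -- on (0, δ), f' > 0
  have hpos : ∀ s, 0 < s → s < δ → 0 < f' s := by
    intro s hs hsδ
    have hmem : s ∈ Metric.ball (0:ℝ) δ₁ ∩ {(0:ℝ)}ᶜ := by
      constructor
      · simp only [Metric.mem_ball, Real.dist_eq, sub_zero]
        rw [abs_of_pos hs]; exact hsδ.trans_le hδb
      · simp [ne_of_gt hs]
    have := h1 hmem
    simp only [Set.mem_setOf_eq, slope_def_field, hf'0] at this
    have : 0 < f' s / s := by simpa using this
    exact (div_pos_iff.mp this).resolve_right (fun h => absurd hs (not_lt.mpr h.2.le)) |>.1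
  -- MVT on [0, δ/2]
  have hhalf : (0:ℝ) < δ/2 := by linarith
  have hin : ∀ x ∈ Set.Icc (0:ℝ) (δ/2), HasDerivAt f (f' x) x := by
    intro x hx
    apply hf
    rw [Real.dist_eq, sub_zero, abs_of_nonneg hx.1]
    have := hx.2; linarith [hδa]
  obtain ⟨ξ, hξmem, hξ⟩ := exists_hasDerivAt_eq_slope f f' hhalf
    (fun x hx => (hin x hx).continuousAt.continuousWithinAt)
    (fun x hx => hin x (Set.mem_Icc.mpr ⟨hx.1.le, hx.2.le⟩))
  have hδ2 : δ ≤ δ₂ := hδc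
  have hfle : f (δ/2) ≤ f 0 := by
    apply h2
    rw [Real.dist_eq, sub_zero, abs_of_pos hhalf]
    linarith
  have h1' : 0 < f' ξ := hpos ξ hξmem.1 (by have := hξmem.2; linarith)
  rw [hξ, sub_zero] at h1'
  have hnum := (div_pos_iff.mp h1').resolve_right
    (fun h => absurd hhalf (not_lt.mpr h.2.le)) |>.1
  linarith

lemma second_deriv_nonneg_of_isLocalMin {f f' : ℝ → ℝ} {c : ℝ}
    (hf : ∀ᶠ t in nhds 0, HasDerivAt f (f' t) t) (hf' : HasDerivAt f' c 0)
    (hmin : IsLocalMin f 0) : 0 ≤ c := by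
  have := second_deriv_nonpos_of_isLocalMax (f := fun t => -f t) (f' := fun t => -f' t)
    (hf.mono fun t h => h.neg) hf'.neg hmin.neg
  linarith

end Generic


section Generic
variable {E : Type*} [NormedAddCommGroup E] [NormedSpace ℝ E]
variable {F : Type*} [NormedAddCommGroup F] [NormedSpace ℝ F]

lemma contDiff_fderiv_top {f : E → F} (hf : ContDiff ℝ (⊤ : ℕ∞) f) :
    ContDiff ℝ (⊤ : ℕ∞) (fderiv ℝ f) := hf.fderiv_right (by simp)

lemma sym2 {f : E → F} (hf : ContDiff ℝ (⊤ : ℕ∞) f) (x v w : E) :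
    fderiv ℝ (fderiv ℝ f) x v w = fderiv ℝ (fderiv ℝ f) x w v :=
  second_derivative_symmetric
    (fun y => (hf.differentiable (by simp) y).hasFDerivAt)
    (((contDiff_fderiv_top hf).differentiable (by simp) x).hasFDerivAt) v w

variable {φ : E → ℝ}

local notation "D1" => fderiv ℝ φ
local notation "D2" => fderiv ℝ (fderiv ℝ φ)
local notation "D3" => fderiv ℝ (fderiv ℝ (fderiv ℝ φ))
local notation "D4" => fderiv ℝ (fderiv ℝ (fderiv ℝ (fderiv ℝ φ)))

section pushes
variable (hφ : ContDiff ℝ (⊤ : ℕ∞) φ)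
include hφ

lemma hD2 : ContDiff ℝ (⊤ : ℕ∞) (fun y => D2 y) := contDiff_fderiv_top (contDiff_fderiv_top hφ)
lemma hD3 : @ContDiff ℝ _ E _ _ _ (ContinuousLinearMap.toNormedAddCommGroup (F := E →L[ℝ] E →L[ℝ] ℝ) (σ₁₂ := RingHom.id ℝ)) ContinuousLinearMap.toNormedSpace (⊤ : ℕ∞) (fun y => D3 y) := contDiff_fderiv_top (hD2 hφ)

lemma push2 (a b x w : E) :
    fderiv ℝ (fun y => D2 y a b) x w = D3 x w a b := by
  have h1 : DifferentiableAt ℝ (fun y => D2 y a) x :=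
    (((hD2 hφ).clm_apply contDiff_const).differentiable (by simp) x)
  rw [fderiv_apply_const h1 b w]
  rw [fderiv_apply_const ((hD2 hφ).differentiable (by simp) x) a w]

lemma push3 (a b c x w : E) :
    fderiv ℝ (fun y => D3 y a b c) x w = D4 x w a b c := by
  have h2 : DifferentiableAt ℝ (fun y => D3 y a b) x :=
    ((((hD3 hφ).clm_apply contDiff_const).clm_apply contDiff_const).differentiable (by simp) x)
  have h1 : DifferentiableAt ℝ (fun y => D3 y a) x :=
    (((hD3 hφ).clm_apply contDiff_const).differentiable (by simp : ((⊤ : ℕ∞) : WithTop ℕ∞) ≠ 0) x)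
  rw [fderiv_apply_const h2 c w, fderiv_apply_const h1 b w,
    fderiv_apply_const ((hD3 hφ).differentiable (by simp) x) a w]

-- symmetry of D3 in slots (1,2)
lemma D3sym12 (x a b c : E) : D3 x a b c = D3 x b a c := by
  have := sym2 (contDiff_fderiv_top hφ) x a b
  exact congrFun (congrArg _ this) c

-- symmetry of D3 in slots (2,3)
lemma D3sym23 (x a b c : E) : D3 x a b c = D3 x a c b := by
  have h1 : (fun y => D2 y b c) = (fun y => D2 y c b) := by
    funext y; exact sym2 hφ y b c
  have e1 := push2 hφ b c x a
  have e2 := push2 hφ c b x a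
  rw [← e1, ← e2, h1]

-- symmetry of D4 in slots (1,2)
lemma D4sym12 (x a b c d : E) : D4 x a b c d = D4 x b a c d := by
  have := sym2 (hD2 hφ) x a b
  exact congrFun (congrArg _ (congrFun (congrArg _ this) c)) d

-- symmetry of D4 in slots (2,3)
lemma D4sym23 (x a b c d : E) : D4 x a b c d = D4 x a c b d := by
  have h1 : (fun y => D3 y b c d) = (fun y => D3 y c b d) := by
    funext y; exact D3sym12 hφ y b c d
  rw [← push3 hφ b c d x a, h1, push3 hφ c b d x a]

-- symmetry of D4 in slots (3,4)
lemma D4sym34 (x a b c d : E) : D4 x a b c d = D4 x a b d c := by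
  have h1 : (fun y => D3 y b c d) = (fun y => D3 y b d c) := by
    funext y; exact D3sym23 hφ y b c d
  rw [← push3 hφ b c d x a, h1, push3 hφ b d c x a]

-- pair swap
lemma D4pairswap (x a b : E) : D4 x a a b b = D4 x b b a a := by
  rw [D4sym23 hφ x a a b b, D4sym12 hφ x a b a b, D4sym34 hφ x b a a b,
    D4sym23 hφ x b a b a, D4sym12 hφ x b b a a]

lemma D3head (x a v : E) : D3 x a a v = D3 x v a a := by
  rw [D3sym23 hφ x a a v, D3sym12 hφ x a v a, D3sym23 hφ x v a a]

end pushes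

lemma convex_D2_nonneg (hφ : ContDiff ℝ (⊤ : ℕ∞) φ) (hconv : ConvexOn ℝ Set.univ φ)
    (x v : E) : 0 ≤ fderiv ℝ (fderiv ℝ φ) x v v := by
  have hdiff : Differentiable ℝ φ := hφ.differentiable (by simp)
  set κ : ℝ → ℝ := fun t => φ (x + t • v) + φ (x + t • (-v)) - 2 * φ x with hκ
  set κ' : ℝ → ℝ := fun t => D1 (x + t • v) v + D1 (x + t • (-v)) (-v) with hκ'
  have hk : ∀ t, HasDerivAt κ (κ' t) t := fun t => by
    exact (((hasDerivAt_line hdiff x v t).add (hasDerivAt_line hdiff x (-v) t)).sub_const _)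
  have hD1v : Differentiable ℝ (fun y => D1 y v) :=
    ((contDiff_fderiv_top hφ).clm_apply contDiff_const).differentiable (by simp)
  have hD1nv : Differentiable ℝ (fun y => D1 y (-v)) :=
    ((contDiff_fderiv_top hφ).clm_apply contDiff_const).differentiable (by simp)
  have hk' : HasDerivAt κ' (D2 x v v + D2 x (-v) (-v)) 0 := by
    have h1 := hasDerivAt_line hD1v x v 0
    have h2 := hasDerivAt_line hD1nv x (-v) 0
    simp only [zero_smul, add_zero] at h1 h2
    rw [fderiv_apply_const ((contDiff_fderiv_top hφ).differentiable (by simp) x) v v] at h1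
    rw [fderiv_apply_const ((contDiff_fderiv_top hφ).differentiable (by simp) x) (-v) (-v)] at h2
    exact h1.add h2
  have hmin : IsLocalMin κ 0 := by
    apply Filter.Eventually.of_forall
    intro t
    have hcomb := hconv.2 (Set.mem_univ (x + t • v)) (Set.mem_univ (x + t • (-v)))
      (by norm_num : (0:ℝ) ≤ 1/2) (by norm_num : (0:ℝ) ≤ 1/2) (by norm_num)
    have heq : (1/2 : ℝ) • (x + t • v) + (1/2 : ℝ) • (x + t • (-v)) = x := by
      module
    rw [heq] at hcomb
    simp only [κ, smul_eq_mul]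
    simp only [zero_smul, add_zero]
    simp only [smul_eq_mul] at hcomb; nlinarith [hcomb]
  have := second_deriv_nonneg_of_isLocalMin (Filter.Eventually.of_forall hk) hk' hmin
  have hneg : D2 x (-v) (-v) = D2 x v v := by
    simp
  rw [hneg] at this
  linarith

end Generic


lemma trace_eq_sum_eigs {n : ℕ} {C : Matrix (Fin n) (Fin n) ℝ} (h : C.IsHermitian) :
    C.trace = ∑ i, h.eigenvalues i := by
  simpa using h.trace_eq_sum_eigenvalues

lemma psd_det_le_trace_pow {n : ℕ} (hn : 1 ≤ n) {C : Matrix (Fin n) (Fin n) ℝ}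
    (hC : C.PosSemidef) : C.det ≤ (C.trace / n) ^ n := by
  have h := hC.1
  have hdet : C.det = ∏ i, h.eigenvalues i := by
    rw [h.det_eq_prod_eigenvalues]; norm_num
  have htr : C.trace = ∑ i, h.eigenvalues i := trace_eq_sum_eigs h
  have heig : ∀ i, 0 ≤ h.eigenvalues i := hC.eigenvalues_nonneg
  have hnn : (0:ℝ) < n := by exact_mod_cast hn
  -- AM-GM
  have hgm := Real.geom_mean_le_arith_mean_weighted Finset.univ (fun _ => 1 / n)
    (fun i => h.eigenvalues i) (fun i _ => by positivity)
    (by simp [Finset.card_univ]; field_simp) (fun i _ => heig i)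
  have hprod : ∏ i, (h.eigenvalues i) ^ (1 / (n:ℝ)) = (∏ i, h.eigenvalues i) ^ (1 / (n:ℝ)) := by
    rw [← Real.finset_prod_rpow Finset.univ _ (fun i _ => heig i)]
  have hsum : ∑ i, (1 / (n:ℝ)) * h.eigenvalues i = C.trace / n := by
    rw [htr, ← Finset.mul_sum]; ring
  rw [hprod, hsum] at hgm
  have hprod_nonneg : 0 ≤ ∏ i, h.eigenvalues i := Finset.prod_nonneg (fun i _ => heig i)
  have := pow_le_pow_left₀ (by positivity) hgm n
  rw [← Real.rpow_natCast ((∏ i, h.eigenvalues i) ^ (1 / (n:ℝ))) n, ← Real.rpow_mul hprod_nonneg] at this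
  rw [one_div, inv_mul_cancel₀ (by positivity : (n:ℝ) ≠ 0), Real.rpow_one] at this
  rw [hdet]
  exact this

lemma psd_det_nonneg {n : ℕ} {C : Matrix (Fin n) (Fin n) ℝ}
    (hC : C.PosSemidef) : 0 ≤ C.det := by
  have h : C.det = ∏ i, hC.1.eigenvalues i := by
    rw [hC.1.det_eq_prod_eigenvalues]; norm_num
  rw [h]
  exact Finset.prod_nonneg (fun i _ => hC.eigenvalues_nonneg i)


section Euc
variable {E : Type*} [NormedAddCommGroup E] [InnerProductSpace ℝ E] [CompleteSpace E]

/-- Riesz map as a real continuous linear map. -/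
def rieszCLM : (E →L[ℝ] ℝ) →L[ℝ] E where
  toFun μ := (InnerProductSpace.toDual ℝ E).symm μ
  map_add' := by intros; simp
  map_smul' := by intros; simp
  cont := (InnerProductSpace.toDual ℝ E).symm.continuous

lemma rieszCLM_inner (μ : E →L[ℝ] ℝ) (v : E) : ⟪(rieszCLM μ : E), v⟫ = μ v :=
  InnerProductSpace.toDual_symm_apply

lemma gradient_eq_riesz (f : E → ℝ) : gradient f = fun y => rieszCLM (fderiv ℝ f y) := rfl

lemma hasFDerivAt_gradient {f : E → ℝ} (hf : ContDiff ℝ (⊤ : ℕ∞) f) (y : E) :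
    HasFDerivAt (gradient f) ((rieszCLM).comp (fderiv ℝ (fderiv ℝ f) y)) y := by
  rw [gradient_eq_riesz]
  exact (rieszCLM.hasFDerivAt).comp y
    (((hf.fderiv_right (m := (⊤ : ℕ∞)) (by simp)).differentiable (by simp) y).hasFDerivAt)

lemma inner_fderiv_gradient {f : E → ℝ} (hf : ContDiff ℝ (⊤ : ℕ∞) f) (y w v : E) :
    ⟪fderiv ℝ (gradient f) y w, v⟫ = fderiv ℝ (fderiv ℝ f) y w v := by
  rw [(hasFDerivAt_gradient hf y).fderiv]
  exact rieszCLM_inner _ v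

lemma inner_gradient {f : E → ℝ} (y v : E) : ⟪gradient f y, v⟫ = fderiv ℝ f y v :=
  rieszCLM_inner _ v

end Euc


section DetPart
variable {n : ℕ} {φ : Euc n → ℝ}

variable (hφ : ContDiff ℝ (⊤ : ℕ∞) φ)
include hφ

lemma hessMat_apply (y : Euc n) (i j : Fin n) :
    hessMat φ y i j = fderiv ℝ (fderiv ℝ φ) y (EuclideanSpace.single i 1)
      (EuclideanSpace.single j 1) := by
  simp [hessMat, iteratedFDeriv_two_apply]

/-- the Gram-type matrix of the Hessian in an orthonormal basis -/
def gram (φ : Euc n → ℝ) (u : OrthonormalBasis (Fin n) ℝ (Euc n)) (y : Euc n) :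
    Matrix (Fin n) (Fin n) ℝ :=
  Matrix.of fun i j => fderiv ℝ (fderiv ℝ φ) y (u i) (u j)

lemma gram_eq_toMatrix (u : OrthonormalBasis (Fin n) ℝ (Euc n)) (y : Euc n) :
    gram φ u y = LinearMap.toMatrix u.toBasis u.toBasis
      (fderiv ℝ (gradient φ) y : Euc n →ₗ[ℝ] Euc n) := by
  ext i j
  rw [LinearMap.toMatrix_apply]
  rw [OrthonormalBasis.coe_toBasis, OrthonormalBasis.coe_toBasis_repr_apply,
    OrthonormalBasis.repr_apply_apply]
  rw [real_inner_comm]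
  rw [ContinuousLinearMap.coe_coe]
  rw [inner_fderiv_gradient hφ]
  simp only [gram, Matrix.of_apply]
  exact sym2 hφ y (u i) (u j)

lemma hessMat_eq_toMatrix (y : Euc n) :
    hessMat φ y = LinearMap.toMatrix (EuclideanSpace.basisFun (Fin n) ℝ).toBasis
      (EuclideanSpace.basisFun (Fin n) ℝ).toBasis
      (fderiv ℝ (gradient φ) y : Euc n →ₗ[ℝ] Euc n) := by
  ext i j
  rw [LinearMap.toMatrix_apply, OrthonormalBasis.coe_toBasis,
    OrthonormalBasis.coe_toBasis_repr_apply, OrthonormalBasis.repr_apply_apply,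
    real_inner_comm, ContinuousLinearMap.coe_coe, inner_fderiv_gradient hφ,
    hessMat_apply hφ]
  rw [EuclideanSpace.basisFun_apply, EuclideanSpace.basisFun_apply]
  exact (sym2 hφ y _ _)

lemma gram_det_eq (u : OrthonormalBasis (Fin n) ℝ (Euc n)) (y : Euc n) :
    (gram φ u y).det = (hessMat φ y).det := by
  rw [gram_eq_toMatrix hφ, hessMat_eq_toMatrix hφ, LinearMap.det_toMatrix, LinearMap.det_toMatrix]

lemma gram_posSemidef (hconv : ConvexOn ℝ Set.univ φ)
    (u : OrthonormalBasis (Fin n) ℝ (Euc n)) (y : Euc n) :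
    (gram φ u y).PosSemidef := by
  rw [Matrix.posSemidef_iff_dotProduct_mulVec]
  constructor
  · ext i j
    simp only [Matrix.conjTranspose_apply, gram, Matrix.of_apply, star_trivial]
    exact sym2 hφ y (u j) (u i)
  · intro c
    have h1 : fderiv ℝ (fderiv ℝ φ) y (∑ i, c i • u i)
        = ∑ i, c i • fderiv ℝ (fderiv ℝ φ) y (u i) := by
      rw [map_sum]
      exact Finset.sum_congr rfl (fun i _ => by rw [ContinuousLinearMap.map_smul])
    have hexp2 : fderiv ℝ (fderiv ℝ φ) y (∑ i, c i • u i) (∑ j, c j • u j)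
        = ∑ i, ∑ j, c i * (c j * fderiv ℝ (fderiv ℝ φ) y (u i) (u j)) := by
      rw [h1, ContinuousLinearMap.sum_apply]
      refine Finset.sum_congr rfl (fun i _ => ?_)
      rw [ContinuousLinearMap.smul_apply, smul_eq_mul, map_sum, Finset.mul_sum]
      refine Finset.sum_congr rfl (fun j _ => ?_)
      rw [ContinuousLinearMap.map_smul, smul_eq_mul]
    have hpos := convex_D2_nonneg hφ hconv y (∑ i, c i • u i)
    rw [hexp2] at hpos
    simp only [dotProduct, Matrix.mulVec, gram, Matrix.of_apply, star_trivial,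
      Finset.mul_sum]
    refine le_trans hpos (le_of_eq ?_)
    refine Finset.sum_congr rfl (fun i _ => Finset.sum_congr rfl (fun j _ => by ring))

/-- main determinant bound -/
lemma det_bound (hconv : ConvexOn ℝ Set.univ φ) (hn : 1 ≤ n)
    (u : OrthonormalBasis (Fin n) ℝ (Euc n)) (ν : Fin n → ℝ) (hν : ∀ i, 0 < ν i) (y : Euc n) :
    (hessMat φ y).det ≤ (∏ i, ν i) *
      ((∑ i, (ν i)⁻¹ * fderiv ℝ (fderiv ℝ φ) y (u i) (u i)) / n) ^ n := by
  set w : Fin n → ℝ := fun i => Real.sqrt (ν i)⁻¹ with hw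
  have hw2 : ∀ i, w i ^ 2 = (ν i)⁻¹ := fun i => Real.sq_sqrt (le_of_lt (inv_pos.mpr (hν i)))
  set A := gram φ u y with hA
  set C := Matrix.diagonal w * A * Matrix.diagonal w with hC
  have hCpsd : C.PosSemidef := by
    have := (gram_posSemidef hφ hconv u y).mul_mul_conjTranspose_same (Matrix.diagonal w)
    simpa [Matrix.diagonal_conjTranspose] using this
  have hprodw : (∏ i, w i) * (∏ i, w i) = ∏ i, (ν i)⁻¹ := by
    rw [← Finset.prod_mul_distrib]
    exact Finset.prod_congr rfl (fun i _ => by rw [← sq]; exact hw2 i)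
  have hdetC : C.det = (∏ i, (ν i)⁻¹) * A.det := by
    rw [hC, Matrix.det_mul, Matrix.det_mul, Matrix.det_diagonal]
    rw [← hprodw]; ring
  have htrC : C.trace = ∑ i, (ν i)⁻¹ * fderiv ℝ (fderiv ℝ φ) y (u i) (u i) := by
    rw [hC, Matrix.trace]
    refine Finset.sum_congr rfl (fun i _ => ?_)
    simp only [Matrix.diag_apply, Matrix.mul_diagonal, Matrix.diagonal_mul, gram,
      Matrix.of_apply]
    have h2 : w i * w i = (ν i)⁻¹ := by rw [← sq]; exact hw2 i
    rw [hA]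
    simp only [gram, Matrix.of_apply]
    linear_combination fderiv ℝ (fderiv ℝ φ) y (u i) (u i) * h2
  have hAM := psd_det_le_trace_pow hn hCpsd
  have hprodν : (0:ℝ) < ∏ i, ν i := Finset.prod_pos (fun i _ => hν i)
  have hAdet : A.det = (∏ i, ν i) * C.det := by
    rw [hdetC, ← mul_assoc, ← Finset.prod_mul_distrib]
    have : ∏ i, ν i * (ν i)⁻¹ = 1 :=
      Finset.prod_eq_one (fun i _ => mul_inv_cancel₀ (ne_of_gt (hν i)))
    rw [this, one_mul]
  have := mul_le_mul_of_nonneg_left hAM hprodν.le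
  rw [← hAdet, htrC] at this
  rw [← gram_det_eq hφ u y]
  exact this

end DetPart

end Aux

set_option maxHeartbeats 8000000 in
/-- **Young-inequality form of the second-variation estimate.** -/
theorem young_form_second_variation
    {n : ℕ} (hn : 1 ≤ n) (d D : ℝ) (hnd : (n : ℝ) ≤ d) (hdD : d ≤ D)
    (V W : Euc n → ℝ) (hVreg : ContDiff ℝ (⊤ : ℕ∞) V) (hWreg : ContDiff ℝ (⊤ : ℕ∞) W)
    (hVlow : ∀ x, -d < V x) (hWlow : ∀ y, -D < W y)
    (ZV ZW : ℝ) (hZV : 0 < ZV) (hZW : 0 < ZW)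
    (φ : Euc n → ℝ) (hφreg : ContDiff ℝ (⊤ : ℕ∞) φ) (hφconv : ConvexOn ℝ univ φ)
    (hMA : ∀ x : Euc n, (ZV / ZW) ^ (1 / d) * (hessMat φ x).det ^ (1 / d)
      = Real.exp ((Theta D (W (gradient φ x)) - Theta d (V x)) / d))
    (xbar e1 : Euc n) (he1 : ‖e1‖ = 1)
    (hmax : ∀ (x e : Euc n), ‖e‖ = 1 → hess φ x e ≤ hess φ xbar e1)
    (ybar : Euc n) (hybar : ybar = gradient φ xbar)
    (l V1 V11 W1 W11 Vb Wb : ℝ)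
    (hl : l = hess φ xbar e1)
    (hV1 : V1 = ⟪gradient V xbar, e1⟫) (hV11 : V11 = hess V xbar e1)
    (hW1 : W1 = ⟪gradient W ybar, e1⟫) (hW11 : W11 = hess W ybar e1)
    (hVb : Vb = V xbar) (hWb : Wb = W ybar)
    (hW11pos : 0 < W11) :
    ∀ ε : ℝ, 0 < ε → ε < 1 →
      W11 * l ^ 2 ≤ 1 / (1 - ε) * (d / D) * ((D + Wb) / (d + Vb)) * V11
        + 1 / (ε * (1 - ε)) * (V1 ^ 2 * W1 ^ 2 / (W11 * (d + Vb) ^ 2)) := by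

  intro ε hε0 hε1
  have hn1 : (1:ℝ) ≤ (n:ℝ) := by exact_mod_cast hn
  have hnR : (0:ℝ) < (n:ℝ) := by linarith
  have hd0 : (0:ℝ) < d := lt_of_lt_of_le hnR hnd
  have hD0 : (0:ℝ) < D := lt_of_lt_of_le hd0 hdD
  have hdV : 0 < d + Vb := by rw [hVb]; have := hVlow xbar; linarith
  have hDW : 0 < D + Wb := by rw [hWb]; have := hWlow ybar; linarith
  have hWdiff : Differentiable ℝ W := hWreg.differentiable (by simp)
  have hVdiff : Differentiable ℝ V := hVreg.differentiable (by simp)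
  have hGdiff : Differentiable ℝ (gradient φ) :=
    fun y => (hasFDerivAt_gradient hφreg y).differentiableAt
  have hfG : ∀ y, fderiv ℝ (gradient φ) y = rieszCLM.comp (fderiv ℝ (fderiv ℝ φ) y) :=
    fun y => (hasFDerivAt_gradient hφreg y).fderiv
  have hHinner : ∀ v w : Euc n, ⟪fderiv ℝ (gradient φ) xbar v, w⟫ = fderiv ℝ (fderiv ℝ φ) xbar v w :=
    fun v w => inner_fderiv_gradient hφreg xbar v w
  have hess_eq : ∀ (f : Euc n → ℝ) (y v : Euc n), hess f y v = fderiv ℝ (fderiv ℝ f) y v v := by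
    intro f y v
    rw [hess, iteratedFDeriv_two_apply]
    simp
  have hPmax : ∀ y, fderiv ℝ (fderiv ℝ φ) y e1 e1 ≤ fderiv ℝ (fderiv ℝ φ) xbar e1 e1 := by
    intro y
    have := hmax y e1 he1
    rwa [hess_eq, hess_eq] at this
  have hl' : l = fderiv ℝ (fderiv ℝ φ) xbar e1 e1 := by rw [hl, hess_eq]
  have hsymm : ((fderiv ℝ (gradient φ) xbar : Euc n →L[ℝ] Euc n) : Euc n →ₗ[ℝ] Euc n).IsSymmetric := by
    intro v w
    simp only [ContinuousLinearMap.coe_coe]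
    rw [hHinner v w, real_inner_comm, hHinner w v]
    exact sym2 hφreg xbar v w
  have he1ne : e1 ≠ 0 := fun h => by rw [h] at he1; simp at he1
  have hsa : IsSelfAdjoint (fderiv ℝ (gradient φ) xbar) :=
    ContinuousLinearMap.isSelfAdjoint_iff_isSymmetric.mpr hsymm
  have hmaxon : IsMaxOn (fderiv ℝ (gradient φ) xbar).reApplyInnerSelf (Metric.sphere 0 ‖e1‖) e1 := by
    intro e he
    rw [he1] at he
    have hne : ‖e‖ = 1 := by simpa using mem_sphere_zero_iff_norm.mp he
    simp only [ContinuousLinearMap.reApplyInnerSelf_apply, Set.mem_setOf_eq]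
    rw [hHinner e e, hHinner e1 e1]
    have := hmax xbar e hne
    rwa [hess_eq, hess_eq] at this
  have hHe1 : fderiv ℝ (gradient φ) xbar e1 = l • e1 := by
    have heig := hsa.hasEigenvector_of_isMaxOn he1ne hmaxon
    have hmem := heig.1
    rw [Module.End.mem_eigenspace_iff] at hmem
    have hμ : ∃ μ : ℝ, fderiv ℝ (gradient φ) xbar e1 = μ • e1 := ⟨_, by simpa using hmem⟩
    obtain ⟨μ, hμ⟩ := hμ
    have h1 : ⟪fderiv ℝ (gradient φ) xbar e1, e1⟫ = μ := by
      rw [hμ, real_inner_smul_left]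
      have h2 : ⟪e1, e1⟫ = 1 := by
        rw [real_inner_self_eq_norm_mul_norm, he1]; norm_num
      rw [h2]; ring
    rw [hHinner e1 e1] at h1
    rw [hμ, ← h1, ← hl']
  have hrank : Module.finrank ℝ (Euc n) = n := finrank_euclideanSpace_fin
  set u := hsymm.eigenvectorBasis hrank with hu
  set ν := hsymm.eigenvalues hrank with hνdef
  have hHu : ∀ i, fderiv ℝ (gradient φ) xbar (u i) = ν i • u i := by
    intro i
    have h := (hsymm.hasEigenvector_eigenvectorBasis hrank i).1
    rw [Module.End.mem_eigenspace_iff] at h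
    rw [ContinuousLinearMap.coe_coe] at h
    exact h
  have hinner_uu : ∀ i j, ⟪u i, u j⟫ = if i = j then (1:ℝ) else 0 :=
    orthonormal_iff_ite.mp u.orthonormal
  have hD2uu : ∀ i j, fderiv ℝ (fderiv ℝ φ) xbar (u i) (u j) = if i = j then ν i else 0 := by
    intro i j
    rw [← hHinner (u i) (u j), hHu i, real_inner_smul_left, hinner_uu]
    split_ifs <;> ring
  have hgram_xbar : gram φ u xbar = Matrix.diagonal ν := by
    ext i j
    simp only [gram, Matrix.of_apply, Matrix.diagonal_apply]
    exact hD2uu i j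
  have hdet_nonneg : ∀ y, 0 ≤ (hessMat φ y).det := fun y => by
    rw [← gram_det_eq hφreg u y]
    exact psd_det_nonneg (gram_posSemidef hφreg hφconv u y)
  have hdet_pos : ∀ y, 0 < (hessMat φ y).det := by
    intro y
    rcases (hdet_nonneg y).lt_or_eq with h | h
    · exact h
    · exfalso
      have h2 := hMA y
      rw [← h, Real.zero_rpow (one_div_ne_zero (ne_of_gt hd0)), mul_zero] at h2
      exact (Real.exp_pos _).ne' h2.symm
  have hprodν_eq : (∏ i, ν i) = (hessMat φ xbar).det := by
    rw [← gram_det_eq hφreg u xbar, hgram_xbar, Matrix.det_diagonal]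
  have hν_pos : ∀ i, 0 < ν i := by
    intro i
    have hnn : 0 ≤ ν i := by
      have h := convex_D2_nonneg hφreg hφconv xbar (u i)
      rw [hD2uu i i] at h
      simpa using h
    rcases hnn.lt_or_eq with h | h
    · exact h
    · exfalso
      have h0 : (∏ j, ν j) = 0 := Finset.prod_eq_zero (Finset.mem_univ i) h.symm
      rw [hprodν_eq] at h0
      exact (hdet_pos xbar).ne' h0
  have hZpos : 0 < ZV / ZW := div_pos hZV hZW
  have logid : ∀ y, Real.log ((hessMat φ y).det)
      = Theta D (W (gradient φ y)) - Theta d (V y) - Real.log (ZV / ZW) := by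
    intro y
    have h2 := congrArg Real.log (hMA y)
    rw [Real.log_mul (ne_of_gt (Real.rpow_pos_of_pos hZpos _))
        (ne_of_gt (Real.rpow_pos_of_pos (hdet_pos y) _)),
      Real.log_rpow hZpos, Real.log_rpow (hdet_pos y), Real.log_exp] at h2
    field_simp at h2
    linarith only [h2]
  have hτxbar : (∑ i, (ν i)⁻¹ * fderiv ℝ (fderiv ℝ φ) xbar (u i) (u i)) = (n:ℝ) := by
    have h1 : ∀ i ∈ Finset.univ, (ν i)⁻¹ * fderiv ℝ (fderiv ℝ φ) xbar (u i) (u i) = 1 := by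
      intro i _
      rw [hD2uu i i]
      simp [inv_mul_cancel₀ (ne_of_gt (hν_pos i))]
    rw [Finset.sum_congr rfl h1]
    simp
  have KEY : ∀ y, 0 < (∑ i, (ν i)⁻¹ * fderiv ℝ (fderiv ℝ φ) y (u i) (u i)) →
      Theta D (W (gradient φ y)) - Theta d (V y)
        - (n:ℝ) * Real.log ((∑ i, (ν i)⁻¹ * fderiv ℝ (fderiv ℝ φ) y (u i) (u i)) / (n:ℝ))
      ≤ Theta D (W (gradient φ xbar)) - Theta d (V xbar) := by
    intro y hτy
    have hb := det_bound hφreg hφconv hn u ν hν_pos y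
    have hPν : 0 < ∏ i, ν i := Finset.prod_pos (fun i _ => hν_pos i)
    have hpow : 0 < ((∑ i, (ν i)⁻¹ * fderiv ℝ (fderiv ℝ φ) y (u i) (u i)) / (n:ℝ)) ^ n :=
      pow_pos (div_pos hτy hnR) n
    have hlog := Real.log_le_log (hdet_pos y) hb
    rw [Real.log_mul (ne_of_gt hPν) (ne_of_gt hpow), Real.log_pow] at hlog
    have h1 := logid y
    have h3 : Real.log (∏ i, ν i)
        = Theta D (W (gradient φ xbar)) - Theta d (V xbar) - Real.log (ZV / ZW) := by
      rw [hprodν_eq]; exact logid xbar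
    linarith only [hlog, h1, h3]
  -- slice derivatives : V part
  have hr : ∀ t : ℝ, HasDerivAt (fun s : ℝ => V (xbar + s • e1)) (fderiv ℝ V (xbar + t • e1) e1) t :=
    fun t => hasDerivAt_line hVdiff xbar e1 t
  have hVe1diff : Differentiable ℝ (fun y => fderiv ℝ V y e1) :=
    ((contDiff_fderiv_top hVreg).clm_apply contDiff_const).differentiable (by simp)
  have hr2 : HasDerivAt (fun t : ℝ => fderiv ℝ V (xbar + t • e1) e1) V11 0 := by
    have h := hasDerivAt_line hVe1diff xbar e1 0
    rw [zero_smul, add_zero] at h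
    rw [fderiv_apply_const ((contDiff_fderiv_top hVreg).differentiable (by simp) xbar) e1 e1] at h
    rw [hV11, hess_eq]
    exact h
  have hr0 : V (xbar + (0:ℝ) • e1) = Vb := by rw [zero_smul, add_zero, hVb]
  have hr'0 : fderiv ℝ V (xbar + (0:ℝ) • e1) e1 = V1 := by
    rw [zero_smul, add_zero, hV1, inner_gradient]
  -- slice derivatives : W ∘ gradient part
  have hsW : ∀ t : ℝ, HasDerivAt (fun s : ℝ => W (gradient φ (xbar + s • e1))) (fderiv ℝ W (gradient φ (xbar + t • e1)) (fderiv ℝ (gradient φ) (xbar + t • e1) e1)) t := by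
    intro t
    have hline := hasDerivAt_line hGdiff xbar e1 t
    have h := (hWdiff (gradient φ (xbar + t • e1))).hasFDerivAt.comp_hasDerivAt t hline
    simpa [Function.comp_def] using h
  have hBe : fderiv ℝ (gradient φ) xbar e1 = l • e1 := hHe1
  have hA : HasDerivAt (fun t : ℝ => fderiv ℝ W (gradient φ (xbar + t • e1)))
      (fderiv ℝ (fderiv ℝ W) ybar (l • e1)) 0 := by
    have hline := hasDerivAt_line hGdiff xbar e1 0
    have h := ((contDiff_fderiv_top hWreg).differentiable (by simp)
      (gradient φ (xbar + (0:ℝ) • e1))).hasFDerivAt.comp_hasDerivAt 0 hline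
    rw [zero_smul, add_zero] at h
    rw [hBe, ← hybar] at h
    simpa [Function.comp_def] using h
  have hq3 : fderiv ℝ (fderiv ℝ (fderiv ℝ φ)) xbar e1 e1 = 0 := by
    ext v
    have h0 : fderiv ℝ (fun y => fderiv ℝ (fderiv ℝ φ) y e1 e1) xbar = 0 :=
      IsLocalMax.fderiv_eq_zero (Filter.Eventually.of_forall hPmax)
    have h1 := push2 hφreg e1 e1 xbar v
    rw [ContinuousLinearMap.zero_apply]
    rw [D3head hφreg xbar e1 v, ← h1, h0]
    simp
  have hBfun : (fun y => fderiv ℝ (gradient φ) y e1)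
      = (fun y => rieszCLM (fderiv ℝ (fderiv ℝ φ) y e1)) := by
    funext y; rw [hfG y]; rfl
  have hBdiff : Differentiable ℝ (fun y => rieszCLM (fderiv ℝ (fderiv ℝ φ) y e1)) :=
    rieszCLM.differentiable.comp
      (((hD2 hφreg).clm_apply contDiff_const).differentiable (by simp))
  have hB : HasDerivAt (fun t : ℝ => fderiv ℝ (gradient φ) (xbar + t • e1) e1) (0 : Euc n) 0 := by
    have h := hasDerivAt_line hBdiff xbar e1 0
    rw [zero_smul, add_zero] at h
    have hF1 : DifferentiableAt ℝ (fun y => fderiv ℝ (fderiv ℝ φ) y e1) xbar :=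
      (((hD2 hφreg).clm_apply contDiff_const).differentiable (by simp)) xbar
    have hFD : HasFDerivAt (fun y => rieszCLM (fderiv ℝ (fderiv ℝ φ) y e1))
        (rieszCLM.comp (fderiv ℝ (fun y => fderiv ℝ (fderiv ℝ φ) y e1) xbar)) xbar :=
      rieszCLM.hasFDerivAt.comp xbar hF1.hasFDerivAt
    have hval : fderiv ℝ (fun y => rieszCLM (fderiv ℝ (fderiv ℝ φ) y e1)) xbar e1 = 0 := by
      rw [hFD.fderiv, ContinuousLinearMap.comp_apply,
        fderiv_apply_const ((hD2 hφreg).differentiable (by simp) xbar) e1 e1, hq3]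
      exact map_zero _
    rw [hval] at h
    have hfun2 : (fun t : ℝ => fderiv ℝ (gradient φ) (xbar + t • e1) e1)
        = (fun t : ℝ => rieszCLM (fderiv ℝ (fderiv ℝ φ) (xbar + t • e1) e1)) := by
      funext t; rw [hfG]; rfl
    rw [hfun2]
    exact h
  have hsW2 : HasDerivAt (fun t : ℝ => fderiv ℝ W (gradient φ (xbar + t • e1)) (fderiv ℝ (gradient φ) (xbar + t • e1) e1)) (l^2 * W11) 0 := by
    have h := hA.clm_apply hB
    rw [zero_smul, add_zero, hBe] at h
    have hval : fderiv ℝ (fderiv ℝ W) ybar (l • e1) (l • e1)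
        + (fderiv ℝ W (gradient φ xbar)) 0 = l^2 * W11 := by
      rw [map_zero, add_zero, ContinuousLinearMap.map_smul, ContinuousLinearMap.map_smul]
      simp only [ContinuousLinearMap.smul_apply, smul_eq_mul]
      rw [hW11, hess_eq]
      ring
    rw [hval] at h
    exact h
  have hsW0 : W (gradient φ (xbar + (0:ℝ) • e1)) = Wb := by rw [zero_smul, add_zero, ← hybar, hWb]
  have hsW'0 : fderiv ℝ W (gradient φ (xbar + (0:ℝ) • e1)) (fderiv ℝ (gradient φ) (xbar + (0:ℝ) • e1) e1) = l * W1 := by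
    rw [zero_smul, add_zero, hBe, ContinuousLinearMap.map_smul, smul_eq_mul, ← hybar,
      hW1, inner_gradient]
  -- slice derivatives : tau part
  have hFidiff : ∀ i : Fin n, Differentiable ℝ (fun y => fderiv ℝ (fderiv ℝ φ) y (u i) (u i)) :=
    fun i => (((hD2 hφreg).clm_apply contDiff_const).clm_apply contDiff_const).differentiable (by simp)
  have hτl : ∀ t : ℝ, HasDerivAt (fun s : ℝ => (∑ i, (ν i)⁻¹ * fderiv ℝ (fderiv ℝ φ) (xbar + s • e1) (u i) (u i))) ((∑ i, (ν i)⁻¹ * fderiv ℝ (fderiv ℝ (fderiv ℝ φ)) (xbar + t • e1) e1 (u i) (u i))) t := by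
    intro t
    apply HasDerivAt.fun_sum
    intro i _
    have h := (hasDerivAt_line (hFidiff i) xbar e1 t).const_mul ((ν i)⁻¹)
    rwa [push2 hφreg (u i) (u i) _ e1] at h
  have hτ2 : HasDerivAt (fun s : ℝ => (∑ i, (ν i)⁻¹ * fderiv ℝ (fderiv ℝ (fderiv ℝ φ)) (xbar + s • e1) e1 (u i) (u i))) (∑ i, (ν i)⁻¹ * fderiv ℝ (fderiv ℝ (fderiv ℝ (fderiv ℝ φ))) xbar e1 e1 (u i) (u i)) 0 := by
    apply HasDerivAt.fun_sum
    intro i _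
    have hdiff3 : Differentiable ℝ (fun y => fderiv ℝ (fderiv ℝ (fderiv ℝ φ)) y e1 (u i) (u i)) :=
      ((((hD3 hφreg).clm_apply contDiff_const).clm_apply contDiff_const).clm_apply
        contDiff_const).differentiable (by simp)
    have h := (hasDerivAt_line hdiff3 xbar e1 0).const_mul ((ν i)⁻¹)
    rw [zero_smul, add_zero] at h
    rwa [push3 hφreg e1 (u i) (u i) xbar e1] at h
  have hT2le : (∑ i, (ν i)⁻¹ * fderiv ℝ (fderiv ℝ (fderiv ℝ (fderiv ℝ φ))) xbar e1 e1 (u i) (u i)) ≤ 0 := by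
    apply Finset.sum_nonpos
    intro i _
    have hD4le : fderiv ℝ (fderiv ℝ (fderiv ℝ (fderiv ℝ φ))) xbar e1 e1 (u i) (u i) ≤ 0 := by
      rw [D4pairswap hφreg xbar e1 (u i)]
      have hPdiff : Differentiable ℝ (fun y => fderiv ℝ (fderiv ℝ φ) y e1 e1) :=
        (((hD2 hφreg).clm_apply contDiff_const).clm_apply contDiff_const).differentiable (by simp)
      have hf : ∀ t : ℝ, HasDerivAt (fun s : ℝ => fderiv ℝ (fderiv ℝ φ) (xbar + s • u i) e1 e1)
          (fderiv ℝ (fderiv ℝ (fderiv ℝ φ)) (xbar + t • u i) (u i) e1 e1) t := by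
        intro t
        have h := hasDerivAt_line hPdiff xbar (u i) t
        rwa [push2 hφreg e1 e1 _ (u i)] at h
      have hdiff3 : Differentiable ℝ (fun y => fderiv ℝ (fderiv ℝ (fderiv ℝ φ)) y (u i) e1 e1) :=
        ((((hD3 hφreg).clm_apply contDiff_const).clm_apply contDiff_const).clm_apply
          contDiff_const).differentiable (by simp)
      have hf' : HasDerivAt (fun t : ℝ => fderiv ℝ (fderiv ℝ (fderiv ℝ φ)) (xbar + t • u i) (u i) e1 e1)
          (fderiv ℝ (fderiv ℝ (fderiv ℝ (fderiv ℝ φ))) xbar (u i) (u i) e1 e1) 0 := by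
        have h := hasDerivAt_line hdiff3 xbar (u i) 0
        rw [zero_smul, add_zero] at h
        rwa [push3 hφreg (u i) e1 e1 xbar (u i)] at h
      have hmax' : IsLocalMax (fun s : ℝ => fderiv ℝ (fderiv ℝ φ) (xbar + s • u i) e1 e1) 0 := by
        apply Filter.Eventually.of_forall
        intro t
        simp only [zero_smul, add_zero]
        exact hPmax _
      exact second_deriv_nonpos_of_isLocalMax (Filter.Eventually.of_forall hf) hf' hmax'
    exact mul_nonpos_iff.mpr (Or.inl ⟨le_of_lt (inv_pos.mpr (hν_pos i)), hD4le⟩)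
  have hτl0 : (∑ i, (ν i)⁻¹ * fderiv ℝ (fderiv ℝ φ) (xbar + (0:ℝ) • e1) (u i) (u i)) = (n:ℝ) := by
    rw [zero_smul, add_zero]; exact hτxbar
  have hev : ∀ᶠ t in nhds (0:ℝ), 0 < (∑ i, (ν i)⁻¹ * fderiv ℝ (fderiv ℝ φ) (xbar + t • e1) (u i) (u i)) := by
    have hcont := (hτl 0).continuousAt
    have h0 : (0:ℝ) < (∑ i, (ν i)⁻¹ * fderiv ℝ (fderiv ℝ φ) (xbar + (0:ℝ) • e1) (u i) (u i)) := by rw [hτl0]; exact hnR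
    exact hcont.eventually (eventually_gt_nhds h0)
  have hWden : ∀ t : ℝ, 0 < 1 + W (gradient φ (xbar + t • e1)) / D := by
    intro t
    have h := hWlow (gradient φ (xbar + t • e1))
    have he : 1 + W (gradient φ (xbar + t • e1)) / D = (D + W (gradient φ (xbar + t • e1))) / D := by field_simp
    rw [he]
    apply div_pos (by linarith) hD0
  have hVden : ∀ t : ℝ, 0 < 1 + V (xbar + t • e1) / d := by
    intro t
    have h := hVlow ((xbar + t • e1))
    have he : 1 + V (xbar + t • e1) / d = (d + V (xbar + t • e1)) / d := by field_simp
    rw [he]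
    apply div_pos (by linarith) hd0
  have hγev : ∀ᶠ t in nhds (0:ℝ), HasDerivAt (fun s : ℝ => D * Real.log (1 + W (gradient φ (xbar + s • e1)) / D) - d * Real.log (1 + V (xbar + s • e1) / d) - (n:ℝ) * Real.log ((∑ i, (ν i)⁻¹ * fderiv ℝ (fderiv ℝ φ) (xbar + s • e1) (u i) (u i)) / (n:ℝ))) (D * ((fderiv ℝ W (gradient φ (xbar + t • e1)) (fderiv ℝ (gradient φ) (xbar + t • e1) e1) / D) / (1 + W (gradient φ (xbar + t • e1)) / D)) - d * ((fderiv ℝ V (xbar + t • e1) e1 / d) / (1 + V (xbar + t • e1) / d)) - (n:ℝ) * (((∑ i, (ν i)⁻¹ * fderiv ℝ (fderiv ℝ (fderiv ℝ φ)) (xbar + t • e1) e1 (u i) (u i)) / (n:ℝ)) / ((∑ i, (ν i)⁻¹ * fderiv ℝ (fderiv ℝ φ) (xbar + t • e1) (u i) (u i)) / (n:ℝ)))) t := by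
    filter_upwards [hev] with t ht
    have h1 : HasDerivAt (fun s : ℝ => D * Real.log (1 + W (gradient φ (xbar + s • e1)) / D))
        (D * ((fderiv ℝ W (gradient φ (xbar + t • e1)) (fderiv ℝ (gradient φ) (xbar + t • e1) e1) / D) / (1 + W (gradient φ (xbar + t • e1)) / D))) t :=
      ((((hsW t).div_const D).const_add 1).log (ne_of_gt (hWden t))).const_mul D
    have h2 : HasDerivAt (fun s : ℝ => d * Real.log (1 + V (xbar + s • e1) / d))
        (d * ((fderiv ℝ V (xbar + t • e1) e1 / d) / (1 + V (xbar + t • e1) / d))) t :=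
      ((((hr t).div_const d).const_add 1).log (ne_of_gt (hVden t))).const_mul d
    have h3 : HasDerivAt (fun s : ℝ => (n:ℝ) * Real.log ((∑ i, (ν i)⁻¹ * fderiv ℝ (fderiv ℝ φ) (xbar + s • e1) (u i) (u i)) / (n:ℝ)))
        ((n:ℝ) * (((∑ i, (ν i)⁻¹ * fderiv ℝ (fderiv ℝ (fderiv ℝ φ)) (xbar + t • e1) e1 (u i) (u i)) / (n:ℝ)) / ((∑ i, (ν i)⁻¹ * fderiv ℝ (fderiv ℝ φ) (xbar + t • e1) (u i) (u i)) / (n:ℝ)))) t :=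
      (((hτl t).div_const (n:ℝ)).log (ne_of_gt (div_pos ht hnR))).const_mul (n:ℝ)
    exact (h1.sub h2).sub h3
  have hγ0eq : D * Real.log (1 + W (gradient φ (xbar + (0:ℝ) • e1)) / D) - d * Real.log (1 + V (xbar + (0:ℝ) • e1) / d) - (n:ℝ) * Real.log ((∑ i, (ν i)⁻¹ * fderiv ℝ (fderiv ℝ φ) (xbar + (0:ℝ) • e1) (u i) (u i)) / (n:ℝ)) = Theta D (W (gradient φ xbar)) - Theta d (V xbar) := by
    rw [zero_smul, add_zero, hτxbar, div_self (ne_of_gt hnR), Real.log_one, mul_zero, sub_zero]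
    simp only [Theta]
  have hγmax : IsLocalMax (fun s : ℝ => D * Real.log (1 + W (gradient φ (xbar + s • e1)) / D) - d * Real.log (1 + V (xbar + s • e1) / d) - (n:ℝ) * Real.log ((∑ i, (ν i)⁻¹ * fderiv ℝ (fderiv ℝ φ) (xbar + s • e1) (u i) (u i)) / (n:ℝ))) 0 := by
    filter_upwards [hev] with t ht
    have hKEY := KEY (xbar + t • e1) ht
    simp only [Theta] at hKEY
    show D * Real.log (1 + W (gradient φ (xbar + t • e1)) / D) - d * Real.log (1 + V (xbar + t • e1) / d) - (n:ℝ) * Real.log ((∑ i, (ν i)⁻¹ * fderiv ℝ (fderiv ℝ φ) (xbar + t • e1) (u i) (u i)) / (n:ℝ)) ≤ D * Real.log (1 + W (gradient φ (xbar + (0:ℝ) • e1)) / D) - d * Real.log (1 + V (xbar + (0:ℝ) • e1) / d) - (n:ℝ) * Real.log ((∑ i, (ν i)⁻¹ * fderiv ℝ (fderiv ℝ φ) (xbar + (0:ℝ) • e1) (u i) (u i)) / (n:ℝ))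
    rw [hγ0eq]
    simp only [Theta]
    exact hKEY
  have hγ'0 : D * ((fderiv ℝ W (gradient φ (xbar + (0:ℝ) • e1)) (fderiv ℝ (gradient φ) (xbar + (0:ℝ) • e1) e1) / D) / (1 + W (gradient φ (xbar + (0:ℝ) • e1)) / D)) - d * ((fderiv ℝ V (xbar + (0:ℝ) • e1) e1 / d) / (1 + V (xbar + (0:ℝ) • e1) / d)) - (n:ℝ) * (((∑ i, (ν i)⁻¹ * fderiv ℝ (fderiv ℝ (fderiv ℝ φ)) (xbar + (0:ℝ) • e1) e1 (u i) (u i)) / (n:ℝ)) / ((∑ i, (ν i)⁻¹ * fderiv ℝ (fderiv ℝ φ) (xbar + (0:ℝ) • e1) (u i) (u i)) / (n:ℝ))) = 0 := by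
    have h := hγev.self_of_nhds
    rw [← h.deriv]
    exact hγmax.deriv_eq_zero
  -- second derivative of γ at 0
  have hnum1 : HasDerivAt (fun t : ℝ => fderiv ℝ W (gradient φ (xbar + t • e1)) (fderiv ℝ (gradient φ) (xbar + t • e1) e1) / D) (l^2 * W11 / D) 0 := hsW2.div_const D
  have hden1 : HasDerivAt (fun t : ℝ => 1 + W (gradient φ (xbar + t • e1)) / D) (l * W1 / D) 0 := by
    have h := ((hsW 0).div_const D).const_add 1
    rwa [hsW'0] at h
  have hq1 : HasDerivAt (fun t : ℝ => (fderiv ℝ W (gradient φ (xbar + t • e1)) (fderiv ℝ (gradient φ) (xbar + t • e1) e1) / D) / (1 + W (gradient φ (xbar + t • e1)) / D))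
      ((l^2 * W11 / D * (1 + Wb / D) - l * W1 / D * (l * W1 / D)) / (1 + Wb / D)^2) 0 := by
    have h := hnum1.div hden1 (ne_of_gt (hWden 0))
    rw [hsW'0, hsW0] at h
    exact h
  have hnum2 : HasDerivAt (fun t : ℝ => fderiv ℝ V (xbar + t • e1) e1 / d) (V11 / d) 0 := hr2.div_const d
  have hden2 : HasDerivAt (fun t : ℝ => 1 + V (xbar + t • e1) / d) (V1 / d) 0 := by
    have h := ((hr 0).div_const d).const_add 1
    rwa [hr'0] at h
  have hq2 : HasDerivAt (fun t : ℝ => (fderiv ℝ V (xbar + t • e1) e1 / d) / (1 + V (xbar + t • e1) / d))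
      ((V11 / d * (1 + Vb / d) - V1 / d * (V1 / d)) / (1 + Vb / d)^2) 0 := by
    have h := hnum2.div hden2 (ne_of_gt (hVden 0))
    rw [hr'0, hr0] at h
    exact h
  have hnum3 : HasDerivAt (fun t : ℝ => (∑ i, (ν i)⁻¹ * fderiv ℝ (fderiv ℝ (fderiv ℝ φ)) (xbar + t • e1) e1 (u i) (u i)) / (n:ℝ)) ((∑ i, (ν i)⁻¹ * fderiv ℝ (fderiv ℝ (fderiv ℝ (fderiv ℝ φ))) xbar e1 e1 (u i) (u i)) / (n:ℝ)) 0 :=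
    hτ2.div_const (n:ℝ)
  have hden3 : HasDerivAt (fun t : ℝ => (∑ i, (ν i)⁻¹ * fderiv ℝ (fderiv ℝ φ) (xbar + t • e1) (u i) (u i)) / (n:ℝ)) ((∑ i, (ν i)⁻¹ * fderiv ℝ (fderiv ℝ (fderiv ℝ φ)) (xbar + (0:ℝ) • e1) e1 (u i) (u i)) / (n:ℝ)) 0 :=
    (hτl 0).div_const (n:ℝ)
  have hτlne : (∑ i, (ν i)⁻¹ * fderiv ℝ (fderiv ℝ φ) (xbar + (0:ℝ) • e1) (u i) (u i)) / (n:ℝ) ≠ 0 := by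
    rw [hτl0, div_self (ne_of_gt hnR)]; norm_num
  have hq3d : HasDerivAt (fun t : ℝ => ((∑ i, (ν i)⁻¹ * fderiv ℝ (fderiv ℝ (fderiv ℝ φ)) (xbar + t • e1) e1 (u i) (u i)) / (n:ℝ)) / ((∑ i, (ν i)⁻¹ * fderiv ℝ (fderiv ℝ φ) (xbar + t • e1) (u i) (u i)) / (n:ℝ)))
      (((∑ i, (ν i)⁻¹ * fderiv ℝ (fderiv ℝ (fderiv ℝ (fderiv ℝ φ))) xbar e1 e1 (u i) (u i)) / (n:ℝ) * ((n:ℝ) / (n:ℝ)) - (∑ i, (ν i)⁻¹ * fderiv ℝ (fderiv ℝ (fderiv ℝ φ)) (xbar + (0:ℝ) • e1) e1 (u i) (u i)) / (n:ℝ) * ((∑ i, (ν i)⁻¹ * fderiv ℝ (fderiv ℝ (fderiv ℝ φ)) (xbar + (0:ℝ) • e1) e1 (u i) (u i)) / (n:ℝ))) / ((n:ℝ) / (n:ℝ))^2) 0 := by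
    have h := hnum3.div hden3 hτlne
    rw [hτl0] at h
    exact h
  have hγ2 : HasDerivAt (fun t : ℝ => D * ((fderiv ℝ W (gradient φ (xbar + t • e1)) (fderiv ℝ (gradient φ) (xbar + t • e1) e1) / D) / (1 + W (gradient φ (xbar + t • e1)) / D)) - d * ((fderiv ℝ V (xbar + t • e1) e1 / d) / (1 + V (xbar + t • e1) / d)) - (n:ℝ) * (((∑ i, (ν i)⁻¹ * fderiv ℝ (fderiv ℝ (fderiv ℝ φ)) (xbar + t • e1) e1 (u i) (u i)) / (n:ℝ)) / ((∑ i, (ν i)⁻¹ * fderiv ℝ (fderiv ℝ φ) (xbar + t • e1) (u i) (u i)) / (n:ℝ))))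
      (D * ((l^2 * W11 / D * (1 + Wb / D) - l * W1 / D * (l * W1 / D)) / (1 + Wb / D)^2)
      - d * ((V11 / d * (1 + Vb / d) - V1 / d * (V1 / d)) / (1 + Vb / d)^2)
      - (n:ℝ) * (((∑ i, (ν i)⁻¹ * fderiv ℝ (fderiv ℝ (fderiv ℝ (fderiv ℝ φ))) xbar e1 e1 (u i) (u i)) / (n:ℝ) * ((n:ℝ) / (n:ℝ)) - (∑ i, (ν i)⁻¹ * fderiv ℝ (fderiv ℝ (fderiv ℝ φ)) (xbar + (0:ℝ) • e1) e1 (u i) (u i)) / (n:ℝ) * ((∑ i, (ν i)⁻¹ * fderiv ℝ (fderiv ℝ (fderiv ℝ φ)) (xbar + (0:ℝ) • e1) e1 (u i) (u i)) / (n:ℝ))) / ((n:ℝ) / (n:ℝ))^2)) 0 :=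
    ((hq1.const_mul D).sub (hq2.const_mul d)).sub (hq3d.const_mul (n:ℝ))
  have hc2 := second_deriv_nonpos_of_isLocalMax hγev hγ2 hγmax
  -- clean up the first-order condition
  have hA1 : D * ((l * W1 / D) / (1 + Wb / D)) - d * ((V1 / d) / (1 + Vb / d))
      - (n:ℝ) * (((∑ i, (ν i)⁻¹ * fderiv ℝ (fderiv ℝ (fderiv ℝ φ)) (xbar + (0:ℝ) • e1) e1 (u i) (u i)) / (n:ℝ)) / ((n:ℝ) / (n:ℝ))) = 0 := by
    have h := hγ'0
    rw [hsW'0, hsW0, hr'0, hr0, hτl0] at h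
    exact h
  -- final algebra
  set T := (∑ i, (ν i)⁻¹ * fderiv ℝ (fderiv ℝ (fderiv ℝ φ)) (xbar + (0:ℝ) • e1) e1 (u i) (u i)) with hTset
  set T2 := (∑ i, (ν i)⁻¹ * fderiv ℝ (fderiv ℝ (fderiv ℝ (fderiv ℝ φ))) xbar e1 e1 (u i) (u i)) with hT2set
  set PW := D + Wb with hPW
  set QV := d + Vb with hQV
  have hne_D : D ≠ 0 := ne_of_gt hD0
  have hne_d : d ≠ 0 := ne_of_gt hd0
  have hne_n : (n:ℝ) ≠ 0 := ne_of_gt hnR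
  have hne_PW : PW ≠ 0 := ne_of_gt hDW
  have hne_QV : QV ≠ 0 := ne_of_gt hdV
  have h1me : (0:ℝ) < 1 - ε := by linarith only [hε1]
  have hne_eps : ε ≠ 0 := ne_of_gt hε0
  have hne_1me : (1:ℝ) - ε ≠ 0 := ne_of_gt h1me
  have hne_W11 : W11 ≠ 0 := ne_of_gt hW11pos
  have hTval : T = D * l * W1 / PW - d * V1 / QV := by
    have eqA : D * ((l * W1 / D) / (1 + Wb / D)) = D * l * W1 / PW := by
      rw [hPW]; field_simp; try ring
    have eqB : d * ((V1 / d) / (1 + Vb / d)) = d * V1 / QV := by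
      rw [hQV]; field_simp; try ring
    have eqC : (n:ℝ) * ((T / (n:ℝ)) / ((n:ℝ) / (n:ℝ))) = T := by field_simp
    rw [eqA, eqB, eqC] at hA1
    linarith only [hA1]
  have eqc1 : D * ((l^2 * W11 / D * (1 + Wb / D) - l * W1 / D * (l * W1 / D)) / (1 + Wb / D)^2)
      = D * l^2 * (W11 * PW - W1^2) / PW^2 := by
    rw [hPW]; field_simp; try ring
  have eqc2 : d * ((V11 / d * (1 + Vb / d) - V1 / d * (V1 / d)) / (1 + Vb / d)^2)
      = d * (V11 * QV - V1^2) / QV^2 := by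
    rw [hQV]; field_simp; try ring
  have eqc3 : (n:ℝ) * ((T2 / (n:ℝ) * ((n:ℝ) / (n:ℝ)) - T / (n:ℝ) * (T / (n:ℝ))) / ((n:ℝ) / (n:ℝ))^2)
      = T2 - T^2 / (n:ℝ) := by field_simp; try ring
  rw [eqc1, eqc2, eqc3] at hc2
  have hC3 : D * l^2 * (W11 * PW - W1^2) / PW^2
      ≤ d * (V11 * QV - V1^2) / QV^2 - T^2 / D := by
    have hTsq : T^2 / D ≤ T^2 / (n:ℝ) :=
      div_le_div_of_nonneg_left (sq_nonneg T) hnR (le_trans hnd hdD)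
    linarith only [hc2, hT2le, hTsq]
  have hmulpos : (0:ℝ) < PW^2 * QV^2 * D := by positivity
  have h4 := mul_le_mul_of_nonneg_right hC3 hmulpos.le
  have hLrw : D * l^2 * (W11 * PW - W1^2) / PW^2 * (PW^2 * QV^2 * D)
      = D^2 * l^2 * (W11 * PW - W1^2) * QV^2 := by field_simp; try ring
  have hRrw : (d * (V11 * QV - V1^2) / QV^2 - T^2 / D) * (PW^2 * QV^2 * D)
      = d * (V11 * QV - V1^2) * PW^2 * D - T^2 * (PW^2 * QV^2) := by field_simp; try ring
  rw [hLrw, hRrw] at h4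
  have htpoly : T * (PW * QV) = D * l * W1 * QV - d * V1 * PW := by
    rw [hTval]; field_simp; try ring
  have hSP : T^2 * (PW^2 * QV^2) = (D * l * W1 * QV - d * V1 * PW)^2 := by
    linear_combination (T * (PW * QV) + (D * l * W1 * QV - d * V1 * PW)) * htpoly
  rw [hSP] at h4
  -- derive the clean key inequality
  have hKmul : (D * l^2 * W11 * QV) * (D * PW * QV)
      ≤ (d * V11 * PW + 2 * d * l * W1 * V1) * (D * PW * QV) := by
    have hc1 : (0:ℝ) ≤ d * V1^2 * PW^2 * D :=
      mul_nonneg (mul_nonneg (mul_nonneg hd0.le (sq_nonneg V1)) (sq_nonneg PW)) hD0.le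
    have hc2' : (0:ℝ) ≤ d^2 * V1^2 * PW^2 :=
      mul_nonneg (mul_nonneg (sq_nonneg d) (sq_nonneg V1)) (sq_nonneg PW)
    linarith only [h4, hc1, hc2']
  have hKEY3 : D * l^2 * W11 * QV ≤ d * V11 * PW + 2 * d * l * W1 * V1 :=
    le_of_mul_le_mul_right hKmul (by positivity)
  have hscaled := mul_le_mul_of_nonneg_left hKEY3
    (show (0:ℝ) ≤ ε * W11 * QV * D by positivity)
  have hy : 2 * (ε * D * W11 * l * QV) * (d * W1 * V1)
      ≤ (ε * D * W11 * l * QV)^2 + (d * W1 * V1)^2 := by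
    nlinarith only [sq_nonneg (ε * D * W11 * l * QV - d * W1 * V1)]
  have hdD2 : d^2 ≤ D^2 := by nlinarith only [hdD, hd0]
  have haux : d^2 * (W1 * V1)^2 ≤ D^2 * (W1 * V1)^2 :=
    mul_le_mul_of_nonneg_right hdD2 (sq_nonneg (W1 * V1))
  have hGD : ε * (1 - ε) * W11^2 * l^2 * QV^2 * D^2
      ≤ ε * d * D * W11 * PW * QV * V11 + D^2 * V1^2 * W1^2 := by
    linarith only [hscaled, hy, haux]
  have hcoefpos : (0:ℝ) < ε * (1 - ε) * W11 * QV^2 * D^2 := by positivity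
  rw [← mul_le_mul_iff_left₀ hcoefpos]
  have eA : (1 / (1 - ε) * (d / D) * (PW / QV) * V11
      + 1 / (ε * (1 - ε)) * (V1^2 * W1^2 / (W11 * QV^2))) * (ε * (1 - ε) * W11 * QV^2 * D^2)
      = ε * d * D * W11 * PW * QV * V11 + D^2 * V1^2 * W1^2 := by
    field_simp
  have eL : W11 * l^2 * (ε * (1 - ε) * W11 * QV^2 * D^2)
      = ε * (1 - ε) * W11^2 * l^2 * QV^2 * D^2 := by ring
  rw [eA, eL]
  exact hGD
end
end

section
/- Escape estimate for monotone maps. Let n ≥ 1 be an integer and let T : ℝⁿ → ℝⁿ be monotone, i.e. ⟨T(a) − T(b), a − b⟩ ≥ 0 for all a, b ∈ ℝⁿ. Let x ∈ ℝⁿ with T(x) ≠ 0, set u = T(x)/|T(x)|, and let s > 0. Then every z ∈ ℝⁿ with |z − (x + 6s·u)| ≤ 3s satisfies |T(z)| ≥ |T(x)|/3. In particular, T(B_{3s}(x + 6s·u)) ⊆ ℝⁿ \ B_{|T(x)|/3}(0). -/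
open Metric Set
open scoped RealInnerProductSpace

noncomputable section

/-- **Escape estimate for monotone maps.** -/
theorem monotone_map_escape
    {n : ℕ} (hn : 1 ≤ n) (T : Euc n → Euc n)
    (hmono : ∀ a b : Euc n, 0 ≤ ⟪T a - T b, a - b⟫)
    (x : Euc n) (hTx : T x ≠ 0) (u : Euc n) (hu : u = ‖T x‖⁻¹ • T x)
    (s : ℝ) (hs : 0 < s) :
    (∀ z : Euc n, ‖z - (x + (6 * s) • u)‖ ≤ 3 * s → ‖T x‖ / 3 ≤ ‖T z‖) ∧
      T '' closedBall (x + (6 * s) • u) (3 * s) ⊆ (ball (0 : Euc n) (‖T x‖ / 3))ᶜ := by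
  have hTx' : (0:ℝ) < ‖T x‖ := norm_pos_iff.mpr hTx
  have hinner_u : ⟪T x, u⟫ = ‖T x‖ := by
    rw [hu, real_inner_smul_right, real_inner_self_eq_norm_sq]
    field_simp
  have main : ∀ z : Euc n, ‖z - (x + (6 * s) • u)‖ ≤ 3 * s → ‖T x‖ / 3 ≤ ‖T z‖ := by
    intro z hz
    set w := z - (x + (6 * s) • u) with hw
    have hd : z - x = (6 * s) • u + w := by rw [hw]; abel
    have h1 : ⟪T x, z - x⟫ ≤ ⟪T z, z - x⟫ := by
      have := hmono z x
      rw [inner_sub_left] at this; linarith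
    have hCS : |⟪T x, w⟫| ≤ ‖T x‖ * (3 * s) := by
      calc |⟪T x, w⟫| ≤ ‖T x‖ * ‖w‖ := abs_real_inner_le_norm _ _
        _ ≤ ‖T x‖ * (3 * s) := by
          exact mul_le_mul_of_nonneg_left hz (norm_nonneg _)
    have h2 : 3 * s * ‖T x‖ ≤ ⟪T x, z - x⟫ := by
      rw [hd, inner_add_right, real_inner_smul_right, hinner_u]
      have := abs_le.mp hCS
      nlinarith
    have hnu : ‖u‖ = 1 := by
      rw [hu, norm_smul, norm_inv, norm_norm]
      field_simp
    have hdz : ‖z - x‖ ≤ 9 * s := by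
      calc ‖z - x‖ = ‖(6 * s) • u + w‖ := by rw [hd]
        _ ≤ ‖(6 * s) • u‖ + ‖w‖ := norm_add_le _ _
        _ ≤ 6 * s + 3 * s := by
            rw [norm_smul, hnu]
            have : |6 * s| = 6 * s := abs_of_pos (by linarith)
            simp only [Real.norm_eq_abs, this, mul_one]
            linarith
        _ = 9 * s := by ring
    have h3 : ⟪T z, z - x⟫ ≤ ‖T z‖ * (9 * s) := by
      calc ⟪T z, z - x⟫ ≤ ‖T z‖ * ‖z - x‖ := real_inner_le_norm _ _
        _ ≤ ‖T z‖ * (9 * s) := mul_le_mul_of_nonneg_left hdz (norm_nonneg _)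
    nlinarith
  refine ⟨main, ?_⟩
  rintro _ ⟨z, hz, rfl⟩
  rw [mem_closedBall, dist_eq_norm] at hz
  simp only [mem_compl_iff, mem_ball, dist_zero_right, not_lt]
  exact main z hz
end
end

section
/- Lower mass bound for shifted balls. Let n ≥ 1 be an integer and d a real with n ≤ d < ∞. Let V : ℝⁿ → ℝ be continuous with V(x) > −d for all x and Z_{V,d} finite. Let 0 < R < ∞, set s = max{R, √d}, and let ω_n be the Lebesgue volume of the unit ball in ℝⁿ. Then for every x ∈ ℝⁿ with |x| ≤ R and every unit vector u ∈ ℝⁿ: μ_{V,d}(B_{3s}(x + 6s·u)) ≥ ω_n·(3s)ⁿ/( Z_{V,d} · (C⁽⁰⁾_{V,d}(10s))^d ) · (1 + 100s²/d)^{−d}. -/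
open MeasureTheory Metric Set
open scoped ENNReal RealInnerProductSpace

noncomputable section

/-! On the shifted ball `B = B_{3s}(x + 6s·u) ⊆ B_{10s}(0)` the definition of `C = C⁽⁰⁾_{V,d}(10s)`
gives `1 + V(y)/d ≤ C (1 + |y|²/d) ≤ C (1 + 100 s²/d)`, so the density of `μ_{V,d}` is at least
`Z⁻¹ C^{-d} (1 + 100 s²/d)^{-d}` on `B`; multiply by `vol B = ω_n (3s)ⁿ`. -/

section

variable {n : ℕ} {U : Euc n → ℝ} {p : ℝ}

lemma one_add_div_pos_of_neg_lt (hp : 0 < p) {y : Euc n} (hy : -p < U y) : 0 < 1 + U y / p := by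
  rw [one_add_div hp.ne']
  exact div_pos (by linarith) hp

lemma znorm_nonneg (hp : 0 < p) (hU : ∀ x, -p < U x) : 0 ≤ Znorm U p :=
  integral_nonneg fun x => Real.rpow_nonneg (one_add_div_pos_of_neg_lt hp (hU x)).le _

lemma ofReal_mul_volume_le_muUP {S : Set (Euc n)} (hS : MeasurableSet S) {c : ℝ}
    (hc : ∀ y ∈ S, c ≤ (Znorm U p)⁻¹ * (1 + U y / p) ^ (-p)) :
    ENNReal.ofReal c * volume S ≤ muUP U p S := by
  rw [muUP, withDensity_apply _ hS, ← setLIntegral_const]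
  exact setLIntegral_mono' hS fun y hy => ENNReal.ofReal_le_ofReal (hc y hy)

lemma ratio0_pos (hp : 0 < p) {y : Euc n} (hy : -p < U y) : 0 < ratio0 U p y :=
  div_pos (by linarith) (by positivity)

lemma continuous_ratio0 (hU : Continuous U) (hp : 0 < p) : Continuous (ratio0 U p) :=
  (continuous_const.add hU).div (continuous_const.add (continuous_norm.pow 2))
    fun x => by positivity

lemma ratio0_le_cUp (hU : Continuous U) (hp : 0 < p) {S : Set (Euc n)}
    (hS : Bornology.IsBounded S) {x : Euc n} (hx : x ∈ S) : ratio0 U p x ≤ cUp U p S := by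
  have hbdd : BddAbove (ratio0 U p '' S) :=
    ((hS.isCompact_closure.image (continuous_ratio0 hU hp)).bddAbove).mono
      (image_mono subset_closure)
  exact le_csSup hbdd (mem_image_of_mem _ hx)

lemma rpow_neg_le_of_ratio0_le (hp : 0 < p) {y : Euc n} (hy : -p < U y) {C r : ℝ}
    (hC : ratio0 U p y ≤ C) (hyr : ‖y‖ ≤ r) :
    (C * (1 + r ^ 2 / p)) ^ (-p) ≤ (1 + U y / p) ^ (-p) := by
  have hden : 0 < p + ‖y‖ ^ 2 := by positivity
  have hC0 : 0 ≤ C := (ratio0_pos hp hy).le.trans hC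
  have hUC : p + U y ≤ C * (p + ‖y‖ ^ 2) := (div_le_iff₀ hden).mp hC
  have hyr2 : ‖y‖ ^ 2 ≤ r ^ 2 := pow_le_pow_left₀ (norm_nonneg y) hyr 2
  have hbase : 1 + U y / p ≤ C * (1 + r ^ 2 / p) := by
    rw [one_add_div hp.ne', one_add_div hp.ne', mul_div_assoc', div_le_div_iff_of_pos_right hp]
    nlinarith
  exact Real.rpow_le_rpow_of_nonpos (one_add_div_pos_of_neg_lt hp hy) hbase (by linarith)

end

lemma volume_ball_eq_unitBallVol {n : ℕ} (c : Euc n) {r : ℝ} (hr : 0 < r) :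
    volume (ball c r) = ENNReal.ofReal (r ^ n) * ENNReal.ofReal (unitBallVol n) := by
  rw [Measure.addHaar_ball_of_pos _ _ hr, finrank_euclideanSpace_fin, unitBallVol,
    ENNReal.ofReal_toReal measure_ball_lt_top.ne]

theorem lower_mass_bound_shifted_balls_general
    {n : ℕ} (hn : 1 ≤ n) (d : ℝ) (hnd : (n : ℝ) ≤ d)
    (V : Euc n → ℝ) (hVcont : Continuous V) (hVlow : ∀ x, -d < V x)
    (R : ℝ) (s : ℝ) (hs : s = max R (Real.sqrt d))
    (x : Euc n) (hx : ‖x‖ ≤ R) (u : Euc n) (hu : ‖u‖ = 1) :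
    ENNReal.ofReal (unitBallVol n * (3 * s) ^ n /
        (Znorm V d * cUp V d (ball (0 : Euc n) (10 * s)) ^ d) * (1 + 100 * s ^ 2 / d) ^ (-d))
      ≤ muUP V d (ball (x + (6 * s) • u) (3 * s)) := by
  have hd : 0 < d := lt_of_lt_of_le (by exact_mod_cast hn) hnd
  have hs0 : 0 < s := hs ▸ (Real.sqrt_pos.mpr hd).trans_le (le_max_right _ _)
  have hxs : ‖x‖ ≤ s := hx.trans (hs ▸ le_max_left _ _)
  have hZ : 0 ≤ Znorm V d := znorm_nonneg hd hVlow
  set C := cUp V d (ball (0 : Euc n) (10 * s))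
  have hsub : ball (x + (6 * s) • u) (3 * s) ⊆ ball 0 (10 * s) := by
    refine ball_subset_ball' ?_
    have := norm_add_le x ((6 * s) • u)
    rw [norm_smul, hu, Real.norm_of_nonneg (by positivity)] at this
    rw [dist_zero_right]
    linarith
  have hC : 0 ≤ C := (ratio0_pos hd (hVlow 0)).le.trans
    (ratio0_le_cUp hVcont hd isBounded_ball (mem_ball_self (by positivity : 0 < 10 * s)))
  have hdensity : ∀ y ∈ ball (x + (6 * s) • u) (3 * s),
      (Znorm V d)⁻¹ * (C * (1 + (10 * s) ^ 2 / d)) ^ (-d) ≤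
        (Znorm V d)⁻¹ * (1 + V y / d) ^ (-d) := fun y hy =>
    mul_le_mul_of_nonneg_left
      (rpow_neg_le_of_ratio0_le hd (hVlow y) (ratio0_le_cUp hVcont hd isBounded_ball (hsub hy))
        (by simpa using (mem_ball.mp (hsub hy)).le))
      (inv_nonneg.mpr hZ)
  refine le_trans (le_of_eq ?_) (ofReal_mul_volume_le_muUP measurableSet_ball hdensity)
  have hω : 0 ≤ unitBallVol n := ENNReal.toReal_nonneg
  rw [volume_ball_eq_unitBallVol _ (by positivity), ← mul_assoc,
    ← ENNReal.ofReal_mul (by positivity), ← ENNReal.ofReal_mul (by positivity)]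
  congr 1
  rw [Real.mul_rpow hC (by positivity), Real.rpow_neg hC,
    show (10 * s) ^ 2 = 100 * s ^ 2 by ring]
  ring

/-- **Lower mass bound for shifted balls.** -/
theorem lower_mass_bound_shifted_balls
    {n : ℕ} (hn : 1 ≤ n) (d : ℝ) (hnd : (n : ℝ) ≤ d)
    (V : Euc n → ℝ) (hVcont : Continuous V) (hVlow : ∀ x, -d < V x)
    (hZV : Integrable fun x : Euc n => (1 + V x / d) ^ (-d))
    (R : ℝ) (hR : 0 < R) (s : ℝ) (hs : s = max R (Real.sqrt d))
    (x : Euc n) (hx : ‖x‖ ≤ R) (u : Euc n) (hu : ‖u‖ = 1) :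
    ENNReal.ofReal (unitBallVol n * (3 * s) ^ n /
        (Znorm V d * cUp V d (ball (0 : Euc n) (10 * s)) ^ d) * (1 + 100 * s ^ 2 / d) ^ (-d))
      ≤ muUP V d (ball (x + (6 * s) • u) (3 * s)) :=
  lower_mass_bound_shifted_balls_general hn d hnd V hVcont hVlow R s hs x hx u hu
end
end
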